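/- UT transform correctness for the delta rule (ungated case, all α = 1): let K ∈ ℝ^{C×d} stack k_1ᵀ,…,k_Cᵀ, β_1,…,β_C ∈ ℝ, and define T = ( I + StrictTril( Diag(β) K Kᵀ ) )⁻¹ Diag(β), where StrictTril keeps strictly lower-triangular entries. Then the rows u_rᵀ of U = T V satisfy the recurrence u_r = β_r ( v_r − ∑_{i=1}^{r−1} u_i (k_iᵀ k_r) ), where V ∈ ℝ^{C×d_v} stacks v_1ᵀ,…,v_Cᵀ. -/

import Mathlib

/-!
`1 + A` is unit lower triangular, hence has determinant `1`, so `U = (1 + A)⁻¹ (Diag(β) V)`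
genuinely solves `(1 + A) U = Diag(β) V`. Row `r` of that triangular system expresses `U r`
through the earlier rows only: this forward substitution is the recurrence.
-/

open Matrix

namespace Matrix

variable {n m R : Type*} [Fintype n] [LinearOrder n] [DecidableEq n] [CommRing R]

theorem det_one_add_of_strictLowerTriangular {N : Matrix n n R}
    (hN : ∀ i j, i ≤ j → N i j = 0) : (1 + N).det = 1 := by
  have hlower : (1 + N).IsLowerTriangular := fun i j hij => by
    have hij : i < j := hij
    simp [one_apply_ne hij.ne, hN i j hij.le]
  rw [det_of_isLowerTriangular _ hlower]
  exact Finset.prod_eq_one fun i _ => by simp [hN i i le_rfl]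

variable [LocallyFiniteOrderBot n]

theorem one_add_mul_row_of_strictLowerTriangular {N : Matrix n n R}
    (hN : ∀ i j, i ≤ j → N i j = 0) (U : Matrix n m R) (r : n) :
    ((1 + N) * U : Matrix n m R) r = U r + ∑ i ∈ Finset.Iio r, N r i • U i := by
  have hsupp : ∑ i, N r i • U i = ∑ i ∈ Finset.Iio r, N r i • U i := by
    rw [← Finset.sum_subset (Finset.subset_univ _)]
    intro i _ hi
    rw [hN r i (not_lt.mp (by simpa using hi)), zero_smul]
  rw [Matrix.add_mul, Matrix.one_mul]
  change U r + N r ᵥ* U = _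
  rw [vecMul_eq_sum, hsupp]

theorem inv_one_add_mul_row_of_strictLowerTriangular {N : Matrix n n R}
    (hN : ∀ i j, i ≤ j → N i j = 0) (B : Matrix n m R) (r : n) :
    ((1 + N)⁻¹ * B : Matrix n m R) r
      = B r - ∑ i ∈ Finset.Iio r, N r i • ((1 + N)⁻¹ * B : Matrix n m R) i := by
  have hunit : IsUnit (1 + N).det := by
    rw [det_one_add_of_strictLowerTriangular hN]; exact isUnit_one
  rw [eq_sub_iff_add_eq, ← one_add_mul_row_of_strictLowerTriangular hN,
    mul_nonsing_inv_cancel_left _ _ hunit]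

end Matrix

theorem stmt19 {C d dv : ℕ}
    (β : Fin C → ℝ) (k : Fin C → Fin d → ℝ) (v : Fin C → Fin dv → ℝ)
    (A : Matrix (Fin C) (Fin C) ℝ)
    -- A = StrictTril(Diag(β) K Kᵀ)
    (hA : ∀ i j : Fin C, A i j = if j < i then β i * (k i ⬝ᵥ k j) else 0)
    (T : Matrix (Fin C) (Fin C) ℝ)
    (hT : T = (1 + A)⁻¹ * diagonal β)
    (U : Matrix (Fin C) (Fin dv) ℝ)
    (hU : U = T * Matrix.of v) :
    ∀ r : Fin C,
      U r = β r • (v r - ∑ i ∈ Finset.Iio r, (k i ⬝ᵥ k r) • U i) := by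
  intro r
  have hA_strict : ∀ i j, i ≤ j → A i j = 0 := fun i j hij => by
    simp [hA, not_lt.mpr hij]
  have hU' : U = (1 + A)⁻¹ * (diagonal β * of v) := by rw [hU, hT, Matrix.mul_assoc]
  have hrow : (diagonal β * of v : Matrix (Fin C) (Fin dv) ℝ) r = β r • v r := by
    ext c; simp
  rw [hU', inv_one_add_mul_row_of_strictLowerTriangular hA_strict, hrow, ← hU', smul_sub,
    Finset.smul_sum]
  congr 1
  refine Finset.sum_congr rfl fun i hi => ?_
  rw [hA, if_pos (Finset.mem_Iio.mp hi), smul_smul, dotProduct_comm]
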